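/- arXiv:2304.01954 — 6 statements merged into one kernel-verified Lean document; each statement's English description precedes it below -/
import Mathlib

section
/- Let Δ ≥ 3 and R ≥ 2 be integers and ε a real with 0 < ε ≤ 1/(8R ln Δ). Let D : ℕ × ℕ → ℝ≥0 be a function satisfying: (i) D(k, ℓ) ≤ k for all k, ℓ; (ii) D(k, 0) ≤ Δ^R for all k; and (iii) for all k ≥ 1 and ℓ ≥ 1, D(k, ℓ) ≤ D(k−1, ℓ−1) + (ε/ℓ)·(max_{m ≤ Δ^R} D(k−1, m) + 1). Then for all k and ℓ, D(k, ℓ) ≤ (1 + 2ε·H(ℓ))·Δ^R, where H(ℓ) = Σ_{i=1}^{ℓ} 1/i for ℓ ≥ 1 and H(0) = 0. -/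
/-!
Induct on `k`. The maximum of `D (k-1) m` over `m ≤ Δ^R` is at most the inductive bound at
breadth `Δ^R`, and `H(Δ^R) ≤ 1 + R ln Δ ≤ 2 R ln Δ` gives `2εH(Δ^R) ≤ 1/2`; since `Δ^R ≥ 2`,
that maximum plus one is at most `2Δ^R`. So the step from breadth `ℓ - 1` to `ℓ` adds at most
`2εΔ^R/ℓ`, which is exactly the increment of `(1 + 2εH(ℓ))Δ^R`.
-/

open Finset Real

lemma sum_range_one_div_succ_eq_harmonic (l : ℕ) :
    ∑ i ∈ range l, (1 : ℝ) / (i + 1) = harmonic l := by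
  simp [harmonic, one_div]

lemma monotone_harmonic : Monotone harmonic :=
  monotone_nat_of_le_succ fun n => by
    rw [harmonic_succ]
    exact le_add_of_nonneg_right (by positivity)

lemma harmonic_nonneg (n : ℕ) : 0 ≤ harmonic n :=
  monotone_harmonic (Nat.zero_le n)

lemma harmonic_pow_le {Δ R : ℕ} (hΔ : 3 ≤ Δ) (hR : 1 ≤ R) :
    (harmonic (Δ ^ R) : ℝ) ≤ 2 * R * log Δ := by
  have hlog : 1 ≤ log Δ :=
    (lt_trans (by norm_num) log_three_gt_d9).le.trans
      (log_le_log (by norm_num) (by exact_mod_cast hΔ))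
  have hR' : (1 : ℝ) ≤ R := by exact_mod_cast hR
  calc (harmonic (Δ ^ R) : ℝ) ≤ 1 + R * log Δ := by
        simpa [log_pow] using harmonic_le_one_add_log (Δ ^ R)
    _ ≤ 2 * R * log Δ := by nlinarith

lemma mul_harmonic_pow_le {Δ R : ℕ} (hΔ : 3 ≤ Δ) (hR : 1 ≤ R) {ε : ℝ}
    (hε : ε ≤ 1 / (8 * R * log Δ)) :
    ε * harmonic (Δ ^ R) ≤ 1 / 4 := by
  have hlog : 0 < log Δ := log_pos (by exact_mod_cast (by omega : 1 < Δ))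
  have hR0 : (0 : ℝ) < R := by exact_mod_cast hR
  calc ε * harmonic (Δ ^ R) ≤ 1 / (8 * R * log Δ) * (2 * R * log Δ) :=
        mul_le_mul hε (harmonic_pow_le hΔ hR)
          (by exact_mod_cast harmonic_nonneg _) (by positivity)
    _ = 1 / 4 := by field_simp; ring

theorem le_one_add_two_mul_harmonic_mul_of_recursion (N : ℕ) {B ε : ℝ} (hB : 0 ≤ B)
    (hε : 0 ≤ ε) (hslack : 2 * ε * harmonic N * B + 1 ≤ B) (D : ℕ → ℕ → ℝ)
    (h1 : ∀ l, D 0 l ≤ 0) (h2 : ∀ k, D k 0 ≤ B)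
    (h3 : ∀ k l : ℕ, D (k + 1) (l + 1) ≤
      D k l + (ε / ((l : ℝ) + 1)) *
        ((range (N + 1)).sup' nonempty_range_add_one (fun m => D k m) + 1)) :
    ∀ k l : ℕ, D k l ≤ (1 + 2 * ε * harmonic l) * B := by
  intro k
  induction k with
  | zero =>
    intro l
    have : (0 : ℝ) ≤ harmonic l := by exact_mod_cast harmonic_nonneg l
    exact (h1 l).trans (by positivity)
  | succ k ih =>
    rintro (_ | l)
    · simpa using h2 (k + 1)
    have hsup : (range (N + 1)).sup' nonempty_range_add_one (fun m => D k m) + 1 ≤ 2 * B := by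
      suffices (range (N + 1)).sup' nonempty_range_add_one (fun m => D k m)
          ≤ (1 + 2 * ε * harmonic N) * B by linarith
      refine sup'_le _ _ fun m hm => (ih m).trans ?_
      have : (harmonic m : ℝ) ≤ harmonic N := by
        exact_mod_cast monotone_harmonic (Nat.lt_succ_iff.mp (mem_range.mp hm))
      gcongr
    calc D (k + 1) (l + 1)
        ≤ (1 + 2 * ε * harmonic l) * B + ε / ((l : ℝ) + 1) * (2 * B) :=
          (h3 k l).trans (add_le_add (ih l) (by gcongr))
      _ = (1 + 2 * ε * harmonic (l + 1)) * B := by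
          rw [harmonic_succ]; push_cast; field_simp; ring

theorem recursion_bound_general (Δ R : ℕ) (hΔ : 3 ≤ Δ) (hR : 2 ≤ R)
    (ε : ℝ) (hε0 : 0 < ε) (hε : ε ≤ 1 / (8 * R * Real.log Δ))
    (D : ℕ → ℕ → ℝ)
    (h1 : ∀ k l, D k l ≤ (k : ℝ))
    (h2 : ∀ k, D k 0 ≤ (Δ : ℝ) ^ R)
    (h3 : ∀ k l : ℕ, D (k + 1) (l + 1) ≤
      D k l + (ε / ((l : ℝ) + 1)) *
        ((Finset.range (Δ ^ R + 1)).sup' Finset.nonempty_range_add_one (fun m => D k m) + 1)) :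
    ∀ k l : ℕ, D k l ≤ (1 + 2 * ε * ∑ i ∈ Finset.range l, (1 : ℝ) / (i + 1)) * (Δ : ℝ) ^ R := by
  have hεH := mul_harmonic_pow_le hΔ (by omega) hε
  have hB : (2 : ℝ) ≤ (Δ : ℝ) ^ R := by
    have : (2 : ℝ) ≤ Δ := by exact_mod_cast (by omega : 2 ≤ Δ)
    exact this.trans (le_self_pow₀ (by linarith) (by omega))
  have hslack : 2 * ε * harmonic (Δ ^ R) * (Δ : ℝ) ^ R + 1 ≤ (Δ : ℝ) ^ R := by nlinarith
  intro k l
  rw [sum_range_one_div_succ_eq_harmonic]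
  exact le_one_add_two_mul_harmonic_mul_of_recursion (Δ ^ R) (by positivity) hε0.le hslack D
    (fun l => by simpa using h1 0 l) h2 h3 k l

/-- The abstract recursion underlying the coupling analysis: any nonnegative function `D`
satisfying the recursive bound is bounded by `(1 + 2εH(ℓ))·Δ^R`. -/
theorem recursion_bound (Δ R : ℕ) (hΔ : 3 ≤ Δ) (hR : 2 ≤ R)
    (ε : ℝ) (hε0 : 0 < ε) (hε : ε ≤ 1 / (8 * R * Real.log Δ))
    (D : ℕ → ℕ → ℝ) (hD0 : ∀ k l, 0 ≤ D k l)
    (h1 : ∀ k l, D k l ≤ (k : ℝ))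
    (h2 : ∀ k, D k 0 ≤ (Δ : ℝ) ^ R)
    (h3 : ∀ k l : ℕ, D (k + 1) (l + 1) ≤
      D k l + (ε / ((l : ℝ) + 1)) *
        ((Finset.range (Δ ^ R + 1)).sup' Finset.nonempty_range_add_one (fun m => D k m) + 1)) :
    ∀ k l : ℕ, D k l ≤ (1 + 2 * ε * ∑ i ∈ Finset.range l, (1 : ℝ) / (i + 1)) * (Δ : ℝ) ^ R :=
  recursion_bound_general Δ R hΔ hR ε hε0 hε D h1 h2 h3
end

section
/- Let d ≥ 0 and q ≥ 1 be integers and γ > 0 a real with q ≥ d + γ. Let p_1, …, p_d ∈ [0,1]^q be subdistributions (i.e., Σ_{b=1}^q p_i(b) ≤ 1 for each i). Then the coloring tree recursion is well defined (its denominator Σ_{b=1}^q Π_{i=1}^d (1 − p_i(b)) is positive) and for every color c ∈ [q], g_c(p_1, …, p_d) ≤ 1/γ. -/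
open Finset

/-- Weierstrass product inequality. -/
lemma one_sub_sum_le_prod_one_sub' {ι : Type*} (s : Finset ι) (f : ι → ℝ)
    (h0 : ∀ i ∈ s, 0 ≤ f i) (h1 : ∀ i ∈ s, f i ≤ 1) :
    1 - ∑ i ∈ s, f i ≤ ∏ i ∈ s, (1 - f i) := by
  induction s using Finset.cons_induction with
  | empty => simp
  | cons a s ha ih =>
    rw [Finset.sum_cons, Finset.prod_cons]
    have h0' : ∀ i ∈ s, 0 ≤ f i := fun i hi => h0 i (Finset.mem_cons_of_mem hi)
    have h1' : ∀ i ∈ s, f i ≤ 1 := fun i hi => h1 i (Finset.mem_cons_of_mem hi)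
    have ha0 : 0 ≤ f a := h0 a (Finset.mem_cons_self _ _)
    have ha1 : f a ≤ 1 := h1 a (Finset.mem_cons_self _ _)
    have hs0 : 0 ≤ ∑ i ∈ s, f i := Finset.sum_nonneg h0'
    have := ih h0' h1'
    nlinarith [this]

/-- The coloring tree recursion:
`g_c(p_1, …, p_d) = Π_i (1 − p_i(c)) / Σ_b Π_i (1 − p_i(b))`. -/
noncomputable def colorRec {q d : ℕ} (p : Fin d → Fin q → ℝ) (c : Fin q) : ℝ :=
  (∏ i, (1 - p i c)) / (∑ b, ∏ i, (1 - p i b))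

/-- If `q ≥ d + γ` with `γ > 0` and the inputs are subdistributions, then the coloring tree
recursion is well defined (positive denominator) and its output entries are at most `1/γ`. -/
theorem colorRec_wellDefined_and_marginal_bound (d q : ℕ) (hq : 1 ≤ q)
    (γ : ℝ) (hγ : 0 < γ) (hdq : (d : ℝ) + γ ≤ (q : ℝ))
    (p : Fin d → Fin q → ℝ)
    (h0 : ∀ i c, 0 ≤ p i c) (h1 : ∀ i c, p i c ≤ 1)
    (hsub : ∀ i, ∑ c, p i c ≤ 1) :
    0 < ∑ b, ∏ i, (1 - p i b) ∧ ∀ c, colorRec p c ≤ 1 / γ := by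
  have hden : γ ≤ ∑ b, ∏ i, (1 - p i b) := by
    have h1' : ∀ b : Fin q, 1 - ∑ i, p i b ≤ ∏ i, (1 - p i b) := fun b =>
      one_sub_sum_le_prod_one_sub' _ _ (fun i _ => h0 i b) (fun i _ => h1 i b)
    have hsum : ∑ b : Fin q, (1 - ∑ i, p i b) ≤ ∑ b, ∏ i, (1 - p i b) :=
      Finset.sum_le_sum fun b _ => h1' b
    have : (q : ℝ) - (d : ℝ) ≤ ∑ b : Fin q, (1 - ∑ i, p i b) := by
      rw [Finset.sum_sub_distrib, Finset.sum_const, Finset.card_univ, Fintype.card_fin,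
        nsmul_eq_mul, mul_one, Finset.sum_comm]
      have : ∑ i : Fin d, ∑ b, p i b ≤ ∑ i : Fin d, (1 : ℝ) :=
        Finset.sum_le_sum fun i _ => hsub i
      simp only [Finset.sum_const, Finset.card_univ, Fintype.card_fin, nsmul_eq_mul,
        mul_one] at this
      linarith
    linarith
  have hpos : 0 < ∑ b, ∏ i, (1 - p i b) := lt_of_lt_of_le hγ hden
  refine ⟨hpos, fun c => ?_⟩
  have hnum1 : ∏ i, (1 - p i c) ≤ 1 := by
    apply Finset.prod_le_one (fun i _ => by linarith [h1 i c]) (fun i _ => by linarith [h0 i c])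
  unfold colorRec
  rw [div_le_div_iff₀ hpos hγ]
  nlinarith [hnum1, hden]
end

section
/- Let d ≥ 0 and q ≥ 2 be integers and γ > 1 a real with q ≥ d + γ. Let p_1, …, p_d ∈ [0, 1/γ]^q be subdistributions (entries at most 1/γ, entries summing to at most 1). Then for every color c ∈ [q], g_c(p_1, …, p_d) / (1 − g_c(p_1, …, p_d)) ≤ (1/(q−1)) · (1 + 1/(γ−1))^{γd/(q−1)}, where g is the coloring tree recursion. -/
/-!
Write `P b = ∏ᵢ (1 - pᵢ(b))`, so that `g_c / (1 - g_c) = P c / ∑_{b ≠ c} P b` with `P c ≤ 1`.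
Bernoulli's inequality gives `(1 - 1/γ)^(γx) ≤ 1 - x` for `0 ≤ x ≤ 1/γ`; as each `pᵢ` has total
mass at most `1`, this yields `∏_{b ≠ c} (1 - pᵢ(b)) ≥ (1 - 1/γ)^γ`, hence
`∏_{b ≠ c} P b ≥ (1 - 1/γ)^(γd)`. AM-GM over the `q - 1` colours `b ≠ c` turns this into
`∑_{b ≠ c} P b ≥ (q - 1) (1 - 1/γ)^(γd/(q-1))`, and `(1 - 1/γ)⁻¹ = 1 + 1/(γ - 1)`.
-/

open Finset

open Real

lemma one_sub_one_div_pos {γ : ℝ} (hγ : 1 < γ) : 0 < 1 - 1 / γ :=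
  sub_pos.mpr ((div_lt_one (one_pos.trans hγ)).mpr hγ)

lemma one_sub_one_div_rpow_mul_le_one_sub {γ x : ℝ} (hγ : 1 < γ) (hx0 : 0 ≤ x)
    (hx : x ≤ 1 / γ) : (1 - 1 / γ) ^ (γ * x) ≤ 1 - x := by
  have hγ0 : 0 < γ := one_pos.trans hγ
  have hs : -1 ≤ -(1 / γ) := by
    rw [neg_le_neg_iff, div_le_one hγ0]; exact hγ.le
  have hγx : γ * x ≤ 1 := by rwa [le_div_iff₀' hγ0] at hx
  calc (1 - 1 / γ) ^ (γ * x) = (1 + -(1 / γ)) ^ (γ * x) := by rw [sub_eq_add_neg]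
    _ ≤ 1 + γ * x * -(1 / γ) := rpow_one_add_le_one_add_mul_self hs (by positivity) hγx
    _ = 1 - x := by field_simp; ring

lemma one_sub_one_div_rpow_le_prod_one_sub {ι : Type*} (s : Finset ι) {γ : ℝ} (hγ : 1 < γ)
    {x : ι → ℝ} (h0 : ∀ b ∈ s, 0 ≤ x b) (hB : ∀ b ∈ s, x b ≤ 1 / γ)
    (hsum : ∑ b ∈ s, x b ≤ 1) : (1 - 1 / γ) ^ γ ≤ ∏ b ∈ s, (1 - x b) := by
  have hγ0 : 0 < γ := one_pos.trans hγ
  have hc0 := one_sub_one_div_pos hγ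
  have hc1 : 1 - 1 / γ ≤ 1 := sub_le_self _ (by positivity)
  calc (1 - 1 / γ) ^ γ ≤ (1 - 1 / γ) ^ (γ * ∑ b ∈ s, x b) :=
        rpow_le_rpow_of_exponent_ge hc0 hc1 (mul_le_of_le_one_right hγ0.le hsum)
    _ = ∏ b ∈ s, (1 - 1 / γ) ^ (γ * x b) := by rw [mul_sum, rpow_sum_of_pos hc0]
    _ ≤ ∏ b ∈ s, (1 - x b) :=
        prod_le_prod (fun b _ => rpow_nonneg hc0.le _)
          (fun b hb => one_sub_one_div_rpow_mul_le_one_sub hγ (h0 b hb) (hB b hb))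

lemma one_sub_one_div_rpow_mul_card_le_prod_prod_one_sub {ι κ : Type*} [Fintype κ]
    (s : Finset ι) {γ : ℝ} (hγ : 1 < γ) {p : κ → ι → ℝ} (h0 : ∀ i, ∀ b ∈ s, 0 ≤ p i b)
    (hB : ∀ i, ∀ b ∈ s, p i b ≤ 1 / γ) (hsum : ∀ i, ∑ b ∈ s, p i b ≤ 1) :
    (1 - 1 / γ) ^ (γ * Fintype.card κ) ≤ ∏ b ∈ s, ∏ i, (1 - p i b) := by
  have hc0 := (one_sub_one_div_pos hγ).le
  calc (1 - 1 / γ) ^ (γ * Fintype.card κ) = ∏ _i : κ, (1 - 1 / γ) ^ γ := by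
        rw [prod_const, card_univ, rpow_mul hc0, rpow_natCast]
    _ ≤ ∏ i, ∏ b ∈ s, (1 - p i b) :=
        prod_le_prod (fun _ _ => rpow_nonneg hc0 _)
          (fun i _ => one_sub_one_div_rpow_le_prod_one_sub s hγ (h0 i) (hB i) (hsum i))
    _ = ∏ b ∈ s, ∏ i, (1 - p i b) := prod_comm

lemma card_mul_rpow_inv_card_le_sum {ι : Type*} {s : Finset ι} (hs : s.Nonempty) {z : ι → ℝ}
    (hz : ∀ i ∈ s, 0 ≤ z i) {a : ℝ} (ha : 0 ≤ a) (hprod : a ≤ ∏ i ∈ s, z i) :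
    #s * a ^ (#s : ℝ)⁻¹ ≤ ∑ i ∈ s, z i := by
  have hcard : (0 : ℝ) < #s := by exact_mod_cast hs.card_pos
  have amgm := geom_mean_le_arith_mean s (fun _ => 1) z (fun _ _ => zero_le_one)
    (by simpa using hcard) hz
  simp only [rpow_one, sum_const, nsmul_eq_mul, mul_one, one_mul] at amgm
  calc #s * a ^ (#s : ℝ)⁻¹ ≤ #s * (∏ i ∈ s, z i) ^ (#s : ℝ)⁻¹ := by gcongr
    _ ≤ #s * ((∑ i ∈ s, z i) / #s) := by gcongr
    _ = ∑ i ∈ s, z i := mul_div_cancel₀ _ hcard.ne'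

lemma div_add_div_one_sub_div_add {a t : ℝ} (h : a + t ≠ 0) :
    a / (a + t) / (1 - a / (a + t)) = a / t := by
  rw [one_sub_div h, add_sub_cancel_left, div_div_div_cancel_right₀ h]

lemma colorRec_div_one_sub_colorRec {q d : ℕ} (p : Fin d → Fin q → ℝ) (c : Fin q)
    (h : ∑ b, ∏ i, (1 - p i b) ≠ 0) :
    colorRec p c / (1 - colorRec p c) =
      (∏ i, (1 - p i c)) / ∑ b ∈ univ.erase c, ∏ i, (1 - p i b) := by
  rw [← add_sum_erase _ _ (mem_univ c)] at h
  rw [colorRec, ← add_sum_erase _ _ (mem_univ c), div_add_div_one_sub_div_add h]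

lemma card_sub_one_mul_rpow_le_sum_erase_prod_one_sub {ι κ : Type*} [Fintype ι] [DecidableEq ι]
    [Fintype κ] (hι : 1 < Fintype.card ι) {γ : ℝ} (hγ : 1 < γ) {p : κ → ι → ℝ}
    (h0 : ∀ i b, 0 ≤ p i b) (hB : ∀ i b, p i b ≤ 1 / γ) (hsub : ∀ i, ∑ b, p i b ≤ 1) (c : ι) :
    (Fintype.card ι - 1) * ((1 - 1 / γ) ^ (γ * Fintype.card κ)) ^ ((Fintype.card ι - 1 : ℝ)⁻¹)
      ≤ ∑ b ∈ univ.erase c, ∏ i, (1 - p i b) := by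
  have hc0 := (one_sub_one_div_pos hγ).le
  have hcard : (#(univ.erase c) : ℝ) = Fintype.card ι - 1 := by
    rw [card_erase_of_mem (mem_univ c), card_univ, Nat.cast_sub hι.le, Nat.cast_one]
  have hne : (univ.erase c).Nonempty := by
    rw [← card_pos, card_erase_of_mem (mem_univ c), card_univ]; omega
  rw [← hcard]
  refine card_mul_rpow_inv_card_le_sum hne
    (fun b _ => prod_nonneg fun i _ => hc0.trans (by linarith [hB i b])) (rpow_nonneg hc0 _) ?_
  exact one_sub_one_div_rpow_mul_card_le_prod_prod_one_sub (univ.erase c) hγ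
    (fun i b _ => h0 i b) (fun i b _ => hB i b)
    (fun i => (sum_le_sum_of_subset_of_nonneg (erase_subset _ _) (fun b _ _ => h0 i b)).trans
      (hsub i))

theorem colorRec_two_level_marginal_bound_general (d q : ℕ) (hq : 2 ≤ q)
    (γ : ℝ) (hγ : 1 < γ)
    (p : Fin d → Fin q → ℝ)
    (h0 : ∀ i c, 0 ≤ p i c) (hB : ∀ i c, p i c ≤ 1 / γ)
    (hsub : ∀ i, ∑ c, p i c ≤ 1) :
    ∀ c, colorRec p c / (1 - colorRec p c) ≤
      (1 / ((q : ℝ) - 1)) * (1 + 1 / (γ - 1)) ^ ((γ * d) / ((q : ℝ) - 1)) := by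
  intro c
  have hc0 := one_sub_one_div_pos hγ
  have hfac : ∀ i b, 0 < 1 - p i b := fun i b => hc0.trans_le (by linarith [hB i b])
  have hothers := card_sub_one_mul_rpow_le_sum_erase_prod_one_sub
    (by rw [Fintype.card_fin]; omega) hγ h0 hB hsub c
  simp only [Fintype.card_fin] at hothers
  have hq1 : (1 : ℝ) < q := by exact_mod_cast hq
  have hc : ∏ i, (1 - p i c) ≤ 1 :=
    prod_le_one (fun i _ => (hfac i c).le) (fun i _ => by linarith [h0 i c])
  have hinv : 1 + 1 / (γ - 1) = (1 - 1 / γ)⁻¹ := by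
    field_simp [(sub_pos.mpr hγ).ne']
    ring
  rw [colorRec_div_one_sub_colorRec p c
    (sum_pos (fun b _ => prod_pos fun i _ => hfac i b) ⟨c, mem_univ c⟩).ne']
  calc (∏ i, (1 - p i c)) / ∑ b ∈ univ.erase c, ∏ i, (1 - p i b)
      ≤ 1 / ((q - 1) * ((1 - 1 / γ) ^ (γ * d)) ^ ((q : ℝ) - 1)⁻¹) :=
        div_le_div₀ zero_le_one hc (by positivity) hothers
    _ = _ := by
        rw [hinv, inv_rpow hc0.le, ← rpow_mul hc0.le, ← div_eq_mul_inv]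
        simp only [one_div, mul_inv]

/-- Two-level marginal bound: if `q ≥ d + γ` with `γ > 1` and the inputs are subdistributions
with entries at most `1/γ`, then
`g_c/(1 − g_c) ≤ (1/(q−1))·(1 + 1/(γ−1))^(γd/(q−1))`. -/
theorem colorRec_two_level_marginal_bound (d q : ℕ) (hq : 2 ≤ q)
    (γ : ℝ) (hγ : 1 < γ) (hdq : (d : ℝ) + γ ≤ (q : ℝ))
    (p : Fin d → Fin q → ℝ)
    (h0 : ∀ i c, 0 ≤ p i c) (hB : ∀ i c, p i c ≤ 1 / γ)
    (hsub : ∀ i, ∑ c, p i c ≤ 1) :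
    ∀ c, colorRec p c / (1 - colorRec p c) ≤
      (1 / ((q : ℝ) - 1)) * (1 + 1 / (γ - 1)) ^ ((γ * d) / ((q : ℝ) - 1)) :=
  colorRec_two_level_marginal_bound_general d q hq γ hγ p h0 hB hsub
end

section
/- Let d ≥ 1 and q be integers with γ := q − d > 1. Let p_1, …, p_d ∈ [0, 1/γ]^q be subdistributions. Then for every color c ∈ [q], g_c(p_1, …, p_d) · Σ_{i=1}^d p_i(c) ≤ (1/q) · exp(−γ/q + 1/(γ−1)), where g is the coloring tree recursion. -/
/-!
Write `γ = q - d` and `s_b = Σ_i p_i(b)`. For the numerator, `Π_i (1 - p_i(c)) ≤ exp (-s_c)`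
and `s exp (-s) ≤ 1/e`. For the denominator, on `[0, 1/γ]` the bound
`1 - x ≥ exp (-γ x / (γ - 1))` gives `Π_i (1 - p_i(b)) ≥ exp (-γ s_b / (γ - 1))`, and
Jensen's inequality for `exp` together with the total mass `Σ_b s_b ≤ d` bounds the
denominator below by `q exp (-γ d / ((γ - 1) q))`. Since `q = γ + d`, the exponents then
combine to at least `-1`.
-/

open Finset

open Real

lemma exp_neg_mul_le_one_sub {γ x : ℝ} (hγ : 1 < γ) (hx₀ : 0 ≤ x) (hx : x ≤ 1 / γ) :
    exp (-(γ / (γ - 1) * x)) ≤ 1 - x := by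
  have hγ₁ : 0 < γ - 1 := by linarith
  have hxγ : x * γ ≤ 1 := (le_div_iff₀ (by linarith)).1 hx
  have hx₁ : x ≤ 1 := hx.trans ((div_le_one (by linarith)).2 hγ.le)
  have hone : 1 ≤ (1 - x) * exp (γ / (γ - 1) * x) :=
    calc 1 ≤ 1 + x * (1 - x * γ) / (γ - 1) :=
          le_add_of_nonneg_right (div_nonneg (mul_nonneg hx₀ (by linarith)) hγ₁.le)
      _ = (1 - x) * (1 + γ / (γ - 1) * x) := by field_simp; ring
      _ ≤ (1 - x) * exp (γ / (γ - 1) * x) := by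
          gcongr
          linarith [add_one_le_exp (γ / (γ - 1) * x)]
  calc exp (-(γ / (γ - 1) * x))
        ≤ exp (-(γ / (γ - 1) * x)) * ((1 - x) * exp (γ / (γ - 1) * x)) :=
        le_mul_of_one_le_right (exp_pos _).le hone
    _ = 1 - x := by rw [mul_left_comm, ← exp_add, neg_add_cancel, exp_zero, mul_one]

lemma exp_neg_mul_sum_le_prod_one_sub {ι : Type*} (s : Finset ι) {γ : ℝ} (hγ : 1 < γ)
    {x : ι → ℝ} (hx₀ : ∀ i ∈ s, 0 ≤ x i) (hx : ∀ i ∈ s, x i ≤ 1 / γ) :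
    exp (-(γ / (γ - 1) * ∑ i ∈ s, x i)) ≤ ∏ i ∈ s, (1 - x i) := by
  rw [mul_sum, ← sum_neg_distrib, exp_sum]
  exact prod_le_prod (fun _ _ => (exp_pos _).le)
    fun i hi => exp_neg_mul_le_one_sub hγ (hx₀ i hi) (hx i hi)

lemma prod_one_sub_le_exp_neg_sum {ι : Type*} (s : Finset ι) {x : ι → ℝ}
    (hx : ∀ i ∈ s, x i ≤ 1) : ∏ i ∈ s, (1 - x i) ≤ exp (-∑ i ∈ s, x i) := by
  rw [← sum_neg_distrib, exp_sum]
  exact prod_le_prod (fun i hi => sub_nonneg.2 (hx i hi)) fun i _ => one_sub_le_exp_neg _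

lemma prod_one_sub_mul_sum_le_exp_neg_one {ι : Type*} (s : Finset ι) {x : ι → ℝ}
    (hx₀ : ∀ i ∈ s, 0 ≤ x i) (hx : ∀ i ∈ s, x i ≤ 1) :
    (∏ i ∈ s, (1 - x i)) * ∑ i ∈ s, x i ≤ exp (-1) :=
  calc (∏ i ∈ s, (1 - x i)) * ∑ i ∈ s, x i ≤ exp (-∑ i ∈ s, x i) * ∑ i ∈ s, x i :=
        mul_le_mul_of_nonneg_right (prod_one_sub_le_exp_neg_sum s hx) (sum_nonneg hx₀)
    _ ≤ exp (-1) := by rw [mul_comm]; exact mul_exp_neg_le_exp_neg_one _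

lemma card_mul_exp_mean_le_sum_exp {ι : Type*} (s : Finset ι) (y : ι → ℝ) :
    #s * exp ((∑ i ∈ s, y i) / #s) ≤ ∑ i ∈ s, exp (y i) := by
  rcases s.eq_empty_or_nonempty with rfl | hs
  · simp
  have hcard : (0 : ℝ) < #s := by exact_mod_cast hs.card_pos
  have hjensen := convexOn_exp.map_sum_le (t := s) (w := fun _ => 1 / (#s : ℝ)) (p := y)
    (fun _ _ => by positivity) (by simp [hcard.ne']) (fun _ _ => Set.mem_univ _)
  simp only [smul_eq_mul, ← mul_sum] at hjensen
  rw [one_div_mul_eq_div] at hjensen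
  calc (#s : ℝ) * exp ((∑ i ∈ s, y i) / #s) ≤ #s * (1 / #s * ∑ i ∈ s, exp (y i)) := by
        gcongr
    _ = ∑ i ∈ s, exp (y i) := by field_simp

lemma neg_one_le_colorRec_exponent {q d : ℝ} (hd : 0 ≤ d) (hγ : 1 < q - d) :
    -1 ≤ -((q - d) / q) + 1 / (q - d - 1) + -((q - d) / (q - d - 1) * d) / q := by
  have hγ₁ : 0 < q - d - 1 := by linarith
  have hq : 0 < q := by linarith
  have key : -((q - d) / q) + 1 / (q - d - 1) + -((q - d) / (q - d - 1) * d) / q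
      = -1 + (q - d) / ((q - d - 1) * q) := by
    field_simp
    ring
  rw [key]
  have : 0 ≤ (q - d) / ((q - d - 1) * q) := by positivity
  linarith

lemma sum_sum_le_card_of_sum_le_one {d q : ℕ} (p : Fin d → Fin q → ℝ)
    (hsub : ∀ i, ∑ c, p i c ≤ 1) : ∑ b, ∑ i, p i b ≤ d := by
  rw [sum_comm]
  simpa using sum_le_sum fun i (_ : i ∈ univ) => hsub i

lemma card_mul_exp_le_sum_prod_one_sub {d q : ℕ} {γ : ℝ} (hγ : 1 < γ)
    (p : Fin d → Fin q → ℝ) (h0 : ∀ i c, 0 ≤ p i c) (hB : ∀ i c, p i c ≤ 1 / γ)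
    (hsub : ∀ i, ∑ c, p i c ≤ 1) :
    q * exp (-(γ / (γ - 1) * d) / q) ≤ ∑ b, ∏ i, (1 - p i b) := by
  have hC : 0 ≤ γ / (γ - 1) := div_nonneg (by linarith) (by linarith)
  calc (q : ℝ) * exp (-(γ / (γ - 1) * d) / q)
      ≤ q * exp ((∑ b, -(γ / (γ - 1) * ∑ i, p i b)) / q) := by
        rw [sum_neg_distrib, ← mul_sum]
        gcongr
        exact sum_sum_le_card_of_sum_le_one p hsub
    _ ≤ ∑ b, exp (-(γ / (γ - 1) * ∑ i, p i b)) := by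
        simpa using card_mul_exp_mean_le_sum_exp univ fun b => -(γ / (γ - 1) * ∑ i, p i b)
    _ ≤ ∑ b, ∏ i, (1 - p i b) := sum_le_sum fun b _ =>
        exp_neg_mul_sum_le_prod_one_sub univ hγ (fun i _ => h0 i b) fun i _ => hB i b

theorem colorRec_product_bound_general (d q : ℕ) (hγ : 1 < (q : ℝ) - d)
    (p : Fin d → Fin q → ℝ)
    (h0 : ∀ i c, 0 ≤ p i c) (hB : ∀ i c, p i c ≤ 1 / ((q : ℝ) - d))
    (hsub : ∀ i, ∑ c, p i c ≤ 1) :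
    ∀ c, colorRec p c * ∑ i, p i c ≤
      (1 / (q : ℝ)) *
        Real.exp (-(((q : ℝ) - d) / q) + 1 / (((q : ℝ) - d) - 1)) := by
  intro c
  have hq : (0 : ℝ) < q := by linarith [d.cast_nonneg (α := ℝ)]
  have hden := card_mul_exp_le_sum_prod_one_sub hγ p h0 hB hsub
  have hnum : (∏ i, (1 - p i c)) * ∑ i, p i c ≤ exp (-1) :=
    prod_one_sub_mul_sum_le_exp_neg_one univ (fun i _ => h0 i c) fun i _ =>
      (hB i c).trans ((div_le_one (by linarith)).2 hγ.le)
  rw [colorRec, div_mul_eq_mul_div, div_le_iff₀ (lt_of_lt_of_le (by positivity) hden)]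
  calc (∏ i, (1 - p i c)) * ∑ i, p i c ≤ exp (-1) := hnum
    _ ≤ exp (-((q - d) / q) + 1 / (q - d - 1) + -((q - d) / (q - d - 1) * d) / q) :=
        exp_le_exp.2 (neg_one_le_colorRec_exponent d.cast_nonneg hγ)
    _ = 1 / q * exp (-((q - d) / q) + 1 / (q - d - 1)) *
          (q * exp (-((q - d) / (q - d - 1) * d) / q)) := by
        rw [exp_add]; field_simp
    _ ≤ 1 / q * exp (-((q - d) / q) + 1 / (q - d - 1)) * ∑ b, ∏ i, (1 - p i b) := by
        gcongr

/-- If `γ := q − d > 1` and the inputs are subdistributions with entries at most `1/γ`, then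
`g_c · Σ_i p_i(c) ≤ (1/q)·exp(−γ/q + 1/(γ−1))`. -/
theorem colorRec_product_bound (d q : ℕ) (hd : 1 ≤ d) (hγ : 1 < (q : ℝ) - d)
    (p : Fin d → Fin q → ℝ)
    (h0 : ∀ i c, 0 ≤ p i c) (hB : ∀ i c, p i c ≤ 1 / ((q : ℝ) - d))
    (hsub : ∀ i, ∑ c, p i c ≤ 1) :
    ∀ c, colorRec p c * ∑ i, p i c ≤
      (1 / (q : ℝ)) *
        Real.exp (-(((q : ℝ) - d) / q) + 1 / (((q : ℝ) - d) - 1)) :=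
  colorRec_product_bound_general d q hγ p h0 hB hsub
end

section
/- Let d ≥ 1 and q ≥ 1 be integers and let p_1, …, p_d ∈ [0,1]^q be subdistributions such that the denominator Σ_{b=1}^q Π_{i=1}^d (1 − p_i(b)) is positive and g_c := g_c(p_1, …, p_d) < 1 for every c ∈ [q]. For each i ∈ [d] define the q × q matrix J_i := diag(1 − g)^{-1} · (√g √g^T − I) · diag(√(p_i ⊙ g)). Then sup over nonzero (x_1, …, x_d) ∈ (ℝ^q)^d of ‖Σ_{i=1}^d J_i x_i‖₂² / Σ_{i=1}^d ‖x_i‖₂² is at most (max_{c∈[q]} 1/(1 − g_c)²) · (max_{c∈[q]} g_c · Σ_{i=1}^d p_i(c)). -/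
open Finset

/-- The `i`-th Jacobian block of the message recursion:
`J_i = diag(1 − g)⁻¹ · (√g √gᵀ − I) · diag(√(p_i ⊙ g))`. -/
noncomputable def Jmat {q d : ℕ} (p : Fin d → Fin q → ℝ) (i : Fin d) :
    Matrix (Fin q) (Fin q) ℝ :=
  Matrix.diagonal (fun c => (1 - colorRec p c)⁻¹) *
    (Matrix.vecMulVec (fun c => Real.sqrt (colorRec p c))
        (fun c => Real.sqrt (colorRec p c)) - 1) *
    Matrix.diagonal (fun c => Real.sqrt (p i c * colorRec p c))

/-- `L²` bound for the Jacobian of the message recursion: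
`‖Σ_i J_i x_i‖₂² ≤ (max_c 1/(1−g_c)²)·(max_c g_c Σ_i p_i(c)) · Σ_i ‖x_i‖₂²`. -/
theorem jacobian_L2_bound (d q : ℕ) (hd : 1 ≤ d) (hq : 1 ≤ q)
    (p : Fin d → Fin q → ℝ)
    (h0 : ∀ i c, 0 ≤ p i c) (h1 : ∀ i c, p i c ≤ 1)
    (hsub : ∀ i, ∑ c, p i c ≤ 1)
    (hden : 0 < ∑ b, ∏ i, (1 - p i b))
    (hg : ∀ c, colorRec p c < 1) :
    ∀ x : Fin d → Fin q → ℝ,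
      ∑ c, (∑ i, (Jmat p i).mulVec (x i) c) ^ 2 ≤
        (Finset.univ.sup' ⟨⟨0, hq⟩, Finset.mem_univ _⟩
            fun c : Fin q => (1 / (1 - colorRec p c)) ^ 2) *
          (Finset.univ.sup' ⟨⟨0, hq⟩, Finset.mem_univ _⟩
            fun c : Fin q => colorRec p c * ∑ i, p i c) *
          (∑ i, ∑ c, x i c ^ 2) := by
  intro x
  set g : Fin q → ℝ := colorRec p with hgdef
  have hg0 : ∀ c, 0 ≤ g c := by
    intro c
    exact div_nonneg (Finset.prod_nonneg fun i _ => by linarith [h1 i c]) hden.le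
  have hgsum : ∑ c, g c = 1 := by
    simp only [hgdef, colorRec]
    rw [← Finset.sum_div, div_self hden.ne']
  have h1g : ∀ c, 0 < 1 - g c := fun c => by linarith [hg c]
  set M1 : ℝ := Finset.univ.sup' ⟨⟨0, hq⟩, Finset.mem_univ _⟩
      (fun c : Fin q => (1 / (1 - g c)) ^ 2) with hM1
  set M2 : ℝ := Finset.univ.sup' ⟨⟨0, hq⟩, Finset.mem_univ _⟩
      (fun c : Fin q => g c * ∑ i, p i c) with hM2
  have hM1le : ∀ c, ((1 - g c)⁻¹) ^ 2 ≤ M1 := by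
    intro c
    have h := Finset.le_sup' (fun c : Fin q => (1 / (1 - g c)) ^ 2) (Finset.mem_univ c)
    rw [hM1]
    simpa only [one_div] using h
  have hM2le : ∀ c, g c * ∑ i, p i c ≤ M2 := by
    intro c
    rw [hM2]
    exact Finset.le_sup' (fun c : Fin q => g c * ∑ i, p i c) (Finset.mem_univ c)
  have hM1nn : 0 ≤ M1 := le_trans (sq_nonneg _) (hM1le ⟨0, hq⟩)
  set y : Fin q → ℝ := fun c => ∑ i, Real.sqrt (p i c * g c) * x i c with hy
  set s : ℝ := ∑ b, Real.sqrt (g b) * y b with hs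
  have hentry : ∀ i c b, Jmat p i c b =
      (1 - g c)⁻¹ * (Real.sqrt (g c) * Real.sqrt (g b) - if c = b then 1 else 0)
        * Real.sqrt (p i b * g b) := by
    intro i c b
    simp [Jmat, Matrix.mul_diagonal, Matrix.diagonal_mul, Matrix.sub_apply,
      Matrix.vecMulVec_apply, Matrix.one_apply, hgdef]
  have hJ : ∀ c, (∑ i, (Jmat p i).mulVec (x i) c) =
      (1 - g c)⁻¹ * (Real.sqrt (g c) * s - y c) := by
    intro c
    have key : ∀ i, (Jmat p i).mulVec (x i) c =
        (1 - g c)⁻¹ * (Real.sqrt (g c) * (∑ b, Real.sqrt (g b) *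
          (Real.sqrt (p i b * g b) * x i b)) - Real.sqrt (p i c * g c) * x i c) := by
      intro i
      simp only [Matrix.mulVec, dotProduct, hentry]
      have step : ∀ b : Fin q,
          (1 - g c)⁻¹ * (Real.sqrt (g c) * Real.sqrt (g b) - if c = b then 1 else 0)
            * Real.sqrt (p i b * g b) * x i b =
          (1 - g c)⁻¹ * (Real.sqrt (g c) * (Real.sqrt (g b) *
            (Real.sqrt (p i b * g b) * x i b))) -
          (if c = b then (1 - g c)⁻¹ * (Real.sqrt (p i b * g b) * x i b) else 0) := by
        intro b
        by_cases h : c = b <;> simp [h] <;> ring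
      rw [Finset.sum_congr rfl fun b _ => step b, Finset.sum_sub_distrib,
        Finset.sum_ite_eq, ← Finset.mul_sum]
      simp only [Finset.mem_univ, if_true]
      rw [← Finset.mul_sum, ← mul_sub]
    rw [Finset.sum_congr rfl fun i _ => key i, ← Finset.mul_sum,
      Finset.sum_sub_distrib, ← Finset.mul_sum, Finset.sum_comm]
    rw [hs, hy]
    simp only [Finset.mul_sum]
  have hyb : ∀ c, (y c) ^ 2 ≤ M2 * ∑ i, x i c ^ 2 := by
    intro c
    have cs := Finset.sum_mul_sq_le_sq_mul_sq Finset.univ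
      (fun i => Real.sqrt (p i c * g c)) (fun i => x i c)
    have hsq : ∀ i : Fin d, Real.sqrt (p i c * g c) ^ 2 = p i c * g c := by
      intro i
      exact Real.sq_sqrt (mul_nonneg (h0 i c) (hg0 c))
    calc (y c) ^ 2 ≤ (∑ i, Real.sqrt (p i c * g c) ^ 2) * ∑ i, x i c ^ 2 := cs
      _ = (g c * ∑ i, p i c) * ∑ i, x i c ^ 2 := by
          rw [Finset.sum_congr rfl fun i _ => hsq i, ← Finset.sum_mul]
          ring
      _ ≤ M2 * ∑ i, x i c ^ 2 := by
          apply mul_le_mul_of_nonneg_right (hM2le c)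
          exact Finset.sum_nonneg fun i _ => sq_nonneg _
  have hmid : ∑ c, (Real.sqrt (g c) * s - y c) ^ 2 ≤ ∑ c, (y c) ^ 2 := by
    have expand : ∀ c, (Real.sqrt (g c) * s - y c) ^ 2 =
        g c * s ^ 2 - 2 * s * (Real.sqrt (g c) * y c) + y c ^ 2 := by
      intro c
      have : Real.sqrt (g c) ^ 2 = g c := Real.sq_sqrt (hg0 c)
      nlinarith [this]
    rw [Finset.sum_congr rfl fun c _ => expand c]
    rw [Finset.sum_add_distrib, Finset.sum_sub_distrib, ← Finset.sum_mul,
      ← Finset.mul_sum, hgsum, ← hs]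
    nlinarith [sq_nonneg s]
  calc ∑ c, (∑ i, (Jmat p i).mulVec (x i) c) ^ 2
      = ∑ c, ((1 - g c)⁻¹) ^ 2 * (Real.sqrt (g c) * s - y c) ^ 2 := by
        rw [Finset.sum_congr rfl fun c _ => by rw [hJ c, mul_pow]]
    _ ≤ ∑ c, M1 * (Real.sqrt (g c) * s - y c) ^ 2 := by
        apply Finset.sum_le_sum
        intro c _
        exact mul_le_mul_of_nonneg_right (hM1le c) (sq_nonneg _)
    _ = M1 * ∑ c, (Real.sqrt (g c) * s - y c) ^ 2 := by rw [← Finset.mul_sum]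
    _ ≤ M1 * ∑ c, (y c) ^ 2 := mul_le_mul_of_nonneg_left hmid hM1nn
    _ ≤ M1 * (M2 * ∑ c, ∑ i, x i c ^ 2) := by
        apply mul_le_mul_of_nonneg_left _ hM1nn
        rw [Finset.mul_sum]
        exact Finset.sum_le_sum fun c _ => hyb c
    _ = M1 * M2 * (∑ i, ∑ c, x i c ^ 2) := by rw [Finset.sum_comm]; ring
end

section
/- (a) Define f(x) := (1/x + 1)·ln(1 + x) − 1 for x > 0. Then for every x ∈ (0, 3/2), 0 < f(x) ≤ 1 − e^{−x/2} < 1. (b) Define s(x) := (1/x)·ln(1/(1−x)) − 1 for x ∈ (0,1). Then for every x ∈ (0, 3/5), 0 < s(x) ≤ 1 − exp(−(1/2)·x/(1−x)) < 1. -/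
/-!
The content of (a) is `(1 + x) log (1 + x) ≤ x (2 - e^{-x/2})`, whose slack is only about
`7·10⁻⁴` at `x = 3/2`. Bound `log (1 + x)` above by three terms of its `artanh` series in
`z = x / (x + 2)` plus a geometric tail, and `e^{-x/2}` above by its degree-six Taylor polynomial
with remainder; after clearing `(x + 2)⁵` the difference of the two sides is `x³ R(x)` with a
polynomial `R` that stays positive on `[0, 3/2]`. The lower bound is `2x / (x + 2) < log (1 + x)`,
and (b) is (a) at `x / (1 - x)`.
-/

open Real Finset

theorem log_one_add_le_sum_add_tail {a : ℝ} (ha : 0 ≤ a) (n : ℕ) :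
    log (1 + a) ≤ ∑ k ∈ range n, 2 * (1 / (2 * k + 1)) * (a / (a + 2)) ^ (2 * k + 1) +
      2 / (2 * n + 1) * (a / (a + 2)) ^ (2 * n + 1) / (1 - (a / (a + 2)) ^ 2) := by
  set z := a / (a + 2)
  have hz0 : 0 ≤ z := by positivity
  have hz1 : z < 1 := (div_lt_one (by linarith)).2 (by linarith)
  have hs := hasSum_log_one_add ha
  rw [← hs.tsum_eq, ← hs.summable.sum_add_tsum_nat_add n]
  gcongr
  have hgeom := (hasSum_geometric_of_lt_one (sq_nonneg z) (by nlinarith)).mul_left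
    (2 / (2 * n + 1) * z ^ (2 * n + 1))
  rw [← div_eq_mul_inv] at hgeom
  refine hasSum_le (fun k => ?_) ((summable_nat_add_iff n).2 hs.summable).hasSum hgeom
  rw [show 2 * (k + n) + 1 = (2 * n + 1) + 2 * k by ring, pow_add, pow_mul]
  push_cast
  rw [mul_one_div, ← mul_assoc]
  gcongr
  linarith

theorem one_add_mul_log_one_add_le {x : ℝ} (hx : 0 ≤ x) :
    (1 + x) * log (1 + x) ≤
      ((1 + x) * (2 * x * (x + 2) ^ 4 + 2 / 3 * x ^ 3 * (x + 2) ^ 2 + 2 / 5 * x ^ 5) + x ^ 7 / 14)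
        / (x + 2) ^ 5 := by
  have hx2 : x + 2 ≠ 0 := by linarith
  have h1z : 1 - (x / (x + 2)) ^ 2 = 4 * (1 + x) / (x + 2) ^ 2 := by
    field_simp
    ring
  have h := log_one_add_le_sum_add_tail hx 3
  simp only [sum_range_succ, sum_range_zero, h1z] at h
  norm_num at h
  refine (mul_le_mul_of_nonneg_left h (by linarith)).trans_eq ?_
  field_simp
  ring

theorem exp_neg_le_of_le_one {y : ℝ} (hy0 : 0 ≤ y) (hy1 : y ≤ 1) :
    exp (-y) ≤ 1 - y + y ^ 2 / 2 - y ^ 3 / 6 + y ^ 4 / 24 - y ^ 5 / 120 + 7 * y ^ 6 / 4320 := by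
  have h := (abs_le.1 (Real.exp_bound (x := -y) (by rwa [abs_neg, abs_of_nonneg hy0]) (n := 6)
    (by norm_num))).2
  simp only [sum_range_succ, sum_range_zero, abs_neg, abs_of_nonneg hy0, Nat.factorial] at h
  norm_num at h
  linarith

theorem one_add_mul_log_one_add_le_mul_two_sub_exp {x : ℝ} (hx0 : 0 ≤ x) (hx1 : x ≤ 3 / 2) :
    (1 + x) * log (1 + x) ≤ x * (2 - exp (-x / 2)) := by
  -- `R(x)`, the cofactor of `x³` below; its minimum on `[0, 3/2]` is about `0.08`, at `x = 3/2`.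
  have hR : 0 ≤ 4/3 + 4/3*x - 3/20*x^2 - 3/5*x^3 - 10669/60480*x^4 - 7/3456*x^5
      + 11/3456*x^6 - 7/6912*x^7 + 1/138240*x^8 - 7/276480*x^9 := by
    have h2 : 0 ≤ 3 / 2 - x := by linarith
    nlinarith [mul_nonneg hx0 h2, pow_nonneg hx0 2, pow_nonneg hx0 3, pow_nonneg hx0 4,
      pow_nonneg hx0 5, pow_nonneg hx0 6, pow_nonneg hx0 7, pow_nonneg hx0 8,
      mul_nonneg (pow_nonneg hx0 8) h2, mul_nonneg (pow_nonneg hx0 3) h2,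
      mul_nonneg (pow_nonneg hx0 2) h2]
  calc (1 + x) * log (1 + x)
      ≤ ((1 + x) * (2 * x * (x + 2) ^ 4 + 2 / 3 * x ^ 3 * (x + 2) ^ 2 + 2 / 5 * x ^ 5)
          + x ^ 7 / 14) / (x + 2) ^ 5 := one_add_mul_log_one_add_le hx0
    _ ≤ x * (2 - (1 - x / 2 + (x / 2) ^ 2 / 2 - (x / 2) ^ 3 / 6 + (x / 2) ^ 4 / 24
          - (x / 2) ^ 5 / 120 + 7 * (x / 2) ^ 6 / 4320)) := by
      rw [div_le_iff₀ (by positivity)]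
      linear_combination x ^ 3 * hR
    _ ≤ x * (2 - exp (-x / 2)) := by
      rw [neg_div]
      gcongr
      exact exp_neg_le_of_le_one (by positivity) (by linarith)

theorem one_lt_one_div_add_one_mul_log_one_add {x : ℝ} (hx : 0 < x) :
    1 < (1 / x + 1) * log (1 + x) :=
  calc 1 ≤ (1 / x + 1) * (2 * x / (x + 2)) := by
        rw [← sub_nonneg]
        field_simp
        linarith
    _ < (1 / x + 1) * log (1 + x) := by
        gcongr
        exact lt_log_one_add_of_pos hx

theorem one_div_add_one_mul_log_one_add_sub_one_bounds {x : ℝ} (hx0 : 0 < x) (hx1 : x < 3 / 2) :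
    0 < (1 / x + 1) * log (1 + x) - 1 ∧
      (1 / x + 1) * log (1 + x) - 1 ≤ 1 - exp (-x / 2) ∧ 1 - exp (-x / 2) < 1 := by
  refine ⟨by linarith [one_lt_one_div_add_one_mul_log_one_add hx0], ?_,
    by linarith [exp_pos (-x / 2)]⟩
  have h := one_add_mul_log_one_add_le_mul_two_sub_exp hx0.le hx1.le
  have hf : (1 / x + 1) * log (1 + x) = (1 + x) * log (1 + x) / x := by field_simp
  rw [hf, sub_le_iff_le_add, div_le_iff₀ hx0]
  linarith

theorem one_div_mul_log_one_div_one_sub_eq {x : ℝ} (hx0 : 0 < x) (hx1 : x < 1) :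
    1 / x * log (1 / (1 - x)) = (1 / (x / (1 - x)) + 1) * log (1 + x / (1 - x)) := by
  have h1x : 1 - x ≠ 0 := by linarith
  congr 2 <;> field_simp <;> ring

/-- The entropy-like inequalities for the weight functions:
(a) for `f(x) = (1/x + 1)·ln(1+x) − 1` and `x ∈ (0, 3/2)`, `0 < f(x) ≤ 1 − e^{−x/2} < 1`;
(b) for `s(x) = (1/x)·ln(1/(1−x)) − 1` and `x ∈ (0, 3/5)`,
`0 < s(x) ≤ 1 − exp(−(1/2)·x/(1−x)) < 1`. -/
theorem entropy_like_inequalities :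
    (∀ x : ℝ, 0 < x → x < 3 / 2 →
      0 < (1 / x + 1) * Real.log (1 + x) - 1 ∧
      (1 / x + 1) * Real.log (1 + x) - 1 ≤ 1 - Real.exp (-x / 2) ∧
      1 - Real.exp (-x / 2) < 1) ∧
    (∀ x : ℝ, 0 < x → x < 3 / 5 →
      0 < (1 / x) * Real.log (1 / (1 - x)) - 1 ∧
      (1 / x) * Real.log (1 / (1 - x)) - 1 ≤
        1 - Real.exp (-(1 / 2) * (x / (1 - x))) ∧
      1 - Real.exp (-(1 / 2) * (x / (1 - x))) < 1) := by
  refine ⟨fun x hx0 hx1 => one_div_add_one_mul_log_one_add_sub_one_bounds hx0 hx1,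
    fun x hx0 hx1 => ?_⟩
  have h1x : 0 < 1 - x := by linarith
  have hy := one_div_add_one_mul_log_one_add_sub_one_bounds (x := x / (1 - x)) (by positivity)
    (by rw [div_lt_iff₀ h1x]; linarith)
  rwa [one_div_mul_log_one_div_one_sub_eq hx0 (by linarith),
    show -(1 / 2) * (x / (1 - x)) = -(x / (1 - x)) / 2 by ring]
end
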